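/- Let G be a finite group of order 2m where m > 1 is odd. Then o(G) ≥ 3.42, unless G is isomorphic to the generalized dihedral group D(C3^k) for some k (i.e., the group C3^k ⋊ C2 with the inverting action), or G ≅ D10, the dihedral group of order 10. -/

import Mathlib

/-- `psi G` is the sum of the orders of the elements of `G`. -/
noncomputable def psi (G : Type*) [Group G] : ℕ := ∑ᶠ x : G, orderOf x

/-- `avgO G` is the average order of the elements of `G`. -/
noncomputable def avgO (G : Type*) [Group G] : ℚ := psi G / Nat.card G

/-- The generalized dihedral group of an abelian group `A`:
elements `r a` form a copy of `A`, elements `sr a` are the reflections,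
and conjugation by any reflection inverts `A`. -/
inductive GDih (A : Type*) : Type _
  | r : A → GDih A
  | sr : A → GDih A

namespace GDih
variable {A : Type*} [CommGroup A]

def mul : GDih A → GDih A → GDih A
  | r a, r b => r (a * b)
  | r a, sr b => sr (b * a⁻¹)
  | sr a, r b => sr (a * b)
  | sr a, sr b => r (b * a⁻¹)

instance : Mul (GDih A) := ⟨mul⟩
instance : One (GDih A) := ⟨r 1⟩
instance : Inv (GDih A) := ⟨fun x => match x with
  | r a => r a⁻¹
  | sr a => sr a⟩

theorem mul_def (x y : GDih A) : x * y = mul x y := rfl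
theorem one_def : (1 : GDih A) = r 1 := rfl

instance : Group (GDih A) where
  mul_assoc := by
    rintro (a | a) (b | b) (c | c) <;>
      simp only [mul_def, mul] <;> congr 1 <;>
      simp [mul_assoc, mul_comm, mul_left_comm]
  one_mul := by rintro (a | a) <;> simp [mul_def, mul, one_def]
  mul_one := by rintro (a | a) <;> simp [mul_def, mul, one_def]
  inv_mul_cancel := by rintro (a | a) <;> simp [mul_def, mul, one_def]

end GDih

/-!
Let `t` be an involution. Left multiplication by `t` is a product of `m` disjoint transpositions,
an odd permutation, so the kernel `N` of the sign of the regular representation has index 2; it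
consists exactly of the elements of odd order. Conjugation by `t` is an involutive automorphism
of `N` with fixed subgroup `C` and "inverted set" `K`; the map `(k, c) ↦ k c` is injective, so
`|K| |C| ≤ m`, and the involutions of `G` are the elements `t k`, `k ∈ K`.

If `C = 1` then `t` inverts all of `N`, so `N` is abelian and `G ≅ D(N)`, whose average order is
`o(N) / 2 + 1`. Counting elements of order `1`, `3`, `5` and `≥ 7`, an abelian group `A` of odd
order has `ψ(A) ≥ 7|A| - 4|A[3]| - 2|A[5]|`, and a proper subgroup has index at least 3; so
`o(A) ≥ 121/25` unless `A` has exponent 3 or `A ≅ C₅` (an elementary abelian 5-group of order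
`≥ 25` has `ψ(A) = 5|A| - 4`).

If `C ≠ 1` then `|C| ≥ 3`, so `G` has at most `m / 3` involutions, while every other element
outside `N` has even order `≠ 4`, hence `≥ 6`; this gives `ψ(G) ≥ 23m/3 - 2 ≥ 171/50 · 2m`.
-/

open Function

theorem psi_eq_sum (G : Type*) [Group G] [Fintype G] : psi G = ∑ x : G, orderOf x :=
  finsum_eq_sum_of_fintype _

theorem avgO_congr {G H : Type*} [Group G] [Group H] (e : G ≃* H) : avgO G = avgO H := by
  have hpsi : psi G = psi H := by
    simp only [psi, ← e.orderOf_eq]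
    exact finsum_comp_equiv e.toEquiv
  rw [avgO, avgO, hpsi, Nat.card_congr e.toEquiv]

theorem div_le_avgO {G : Type*} [Group G] [Finite G] {p q : ℕ} (hq : 0 < q)
    (h : p * Nat.card G ≤ q * psi G) : (p / q : ℚ) ≤ avgO G := by
  rw [avgO, div_le_div_iff₀ (by exact_mod_cast hq) (by exact_mod_cast Nat.card_pos),
    mul_comm (psi G : ℚ)]
  exact_mod_cast h

theorem sum_ite_eq_mul_card {α : Type*} [Fintype α] (p : α → Prop) [DecidablePred p] (c : ℕ) :
    ∑ x, (if p x then c else 0) = c * Nat.card {x // p x} := by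
  rw [Finset.sum_ite, Finset.sum_const_zero, add_zero, Finset.sum_const, smul_eq_mul,
    Nat.card_eq_fintype_card, Fintype.card_subtype, mul_comm]

theorem three_le_of_dvd_of_odd {d n : ℕ} (hn : Odd n) (hd : d ∣ n) (hd1 : d ≠ 1) : 3 ≤ d := by
  obtain ⟨k, rfl⟩ := hn.of_dvd_nat hd
  omega

namespace Subgroup

variable {G : Type*} [Group G]

theorem three_le_card_of_ne_bot (hG : Odd (Nat.card G)) {K : Subgroup G} (hK : K ≠ ⊥) :
    3 ≤ Nat.card K :=
  three_le_of_dvd_of_odd hG K.card_subgroup_dvd_card (mt card_eq_one.mp hK)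

theorem three_mul_card_le_of_ne_top [Finite G] (hG : Odd (Nat.card G)) {K : Subgroup G}
    (hK : K ≠ ⊤) : 3 * Nat.card K ≤ Nat.card G := by
  have h3 : 3 ≤ K.index := three_le_of_dvd_of_odd hG K.index_dvd_card (mt index_eq_one.mp hK)
  rw [← K.card_mul_index, mul_comm]
  exact Nat.mul_le_mul_left _ h3

end Subgroup

namespace GDih

variable {A : Type*}

def equivSum : GDih A ≃ A ⊕ A where
  toFun
    | r a => .inl a
    | sr a => .inr a
  invFun
    | .inl a => r a
    | .inr a => sr a
  left_inv := by rintro (a | a) <;> rfl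
  right_inv := by rintro (a | a) <;> rfl

instance [Fintype A] : Fintype (GDih A) := Fintype.ofEquiv _ equivSum.symm

theorem card [Finite A] : Nat.card (GDih A) = 2 * Nat.card A := by
  rw [Nat.card_congr equivSum, Nat.card_sum, two_mul]

variable [CommGroup A]

@[simp] theorem r_mul_r (a b : A) : r a * r b = r (a * b) := rfl
@[simp] theorem r_mul_sr (a b : A) : r a * sr b = sr (b * a⁻¹) := rfl
@[simp] theorem sr_mul_r (a b : A) : sr a * r b = sr (a * b) := rfl
@[simp] theorem sr_mul_sr (a b : A) : sr a * sr b = r (b * a⁻¹) := rfl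

def rHom : A →* GDih A where
  toFun := r
  map_one' := rfl
  map_mul' _ _ := rfl

theorem orderOf_r (a : A) : orderOf (r a) = orderOf a :=
  orderOf_injective rHom (fun _ _ h => by cases h; rfl) a

theorem orderOf_sr (a : A) : orderOf (sr a) = 2 :=
  orderOf_eq_prime (by simp [sq, one_def]) (by simp [one_def])

theorem psi_eq [Finite A] : psi (GDih A) = psi A + 2 * Nat.card A := by
  have := Fintype.ofFinite A
  rw [psi_eq_sum, psi_eq_sum, ← equivSum.symm.sum_comp, Fintype.sum_sum_type]
  simp [equivSum, orderOf_r, orderOf_sr, mul_comm]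

theorem avgO_eq [Finite A] : avgO (GDih A) = avgO A / 2 + 1 := by
  have : (Nat.card A : ℚ) ≠ 0 := by exact_mod_cast Nat.card_pos.ne'
  rw [avgO, avgO, psi_eq, card]
  push_cast
  field_simp

def congr {B : Type*} [CommGroup B] (e : A ≃* B) : GDih A ≃* GDih B where
  toFun
    | r a => r (e a)
    | sr a => sr (e a)
  invFun
    | r b => r (e.symm b)
    | sr b => sr (e.symm b)
  left_inv := by rintro (a | a) <;> simp
  right_inv := by rintro (b | b) <;> simp
  map_mul' := by rintro (a | a) (b | b) <;> simp

def zmodMulEquiv (n : ℕ) : GDih (Multiplicative (ZMod n)) ≃* DihedralGroup n where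
  toFun
    | r a => DihedralGroup.r a.toAdd
    | sr a => DihedralGroup.sr a.toAdd
  invFun
    | DihedralGroup.r i => r (Multiplicative.ofAdd i)
    | DihedralGroup.sr i => sr (Multiplicative.ofAdd i)
  left_inv := by rintro (a | a) <;> rfl
  right_inv := by rintro (i | i) <;> rfl
  map_mul' := by rintro (a | a) (b | b) <;> simp [sub_eq_add_neg]

noncomputable def mulEquivDihedralGroup {p : ℕ} [Fact p.Prime] (hA : Nat.card A = p) :
    GDih A ≃* DihedralGroup p :=
  (congr (mulEquivOfPrimeCardEq hA (by simp))).trans (zmodMulEquiv p)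

section lift

variable {G : Type*} [Group G] (ι : A →* G) (t : G) (ht : t * t = 1)
  (hι : ∀ a, t * ι a * t = ι a⁻¹)

def lift : GDih A →* G where
  toFun
    | r a => ι a
    | sr a => t * ι a
  map_one' := map_one ι
  map_mul' := by
    have hswap : ∀ a, ι a * t = t * ι a⁻¹ := fun a => by
      rw [← hι, ← mul_assoc, ← mul_assoc, ht, one_mul]
    rintro (a | a) (b | b)
    · exact map_mul ι a b
    · show t * ι (b * a⁻¹) = ι a * (t * ι b)
      rw [← mul_assoc, hswap, mul_assoc, ← map_mul, mul_comm b]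
    · show t * ι (a * b) = t * ι a * ι b
      rw [map_mul, mul_assoc]
    · show ι (b * a⁻¹) = t * ι a * (t * ι b)
      rw [mul_assoc t, ← mul_assoc (ι a), hswap, ← mul_assoc, ← mul_assoc, ht, one_mul,
        ← map_mul, mul_comm b]

theorem lift_bijective (hinj : Injective ι) (hindex : ι.range.index = 2) (htι : t ∉ ι.range) :
    Bijective (lift ι t ht hι) := by
  refine ⟨(injective_iff_map_eq_one _).mpr ?_, fun x => ?_⟩
  · rintro (a | a) h
    · exact congrArg r (hinj (h.trans (map_one ι).symm))
    · exact absurd ⟨a⁻¹, by rw [map_inv]; exact (eq_inv_of_mul_eq_one_left h).symm⟩ htι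
  · by_cases hx : x ∈ ι.range
    · obtain ⟨a, rfl⟩ := hx
      exact ⟨r a, rfl⟩
    · obtain ⟨a, ha⟩ := (Subgroup.mul_mem_iff_of_index_two hindex).mpr (iff_of_false htι hx)
      exact ⟨sr a, show t * ι a = x by rw [ha, ← mul_assoc, ht, one_mul]⟩

end lift

end GDih

theorem seven_le_orderOf_add_ite {G : Type*} [Group G] [DecidableEq G] {a : G}
    (ha : Odd (orderOf a)) :
    7 ≤ orderOf a + (if a ^ 3 = 1 then 4 else 0) + (if a ^ 5 = 1 then 2 else 0) := by
  simp only [← orderOf_dvd_iff_pow_eq_one]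
  obtain ⟨k, hk⟩ := ha
  rw [hk]
  rcases Nat.lt_or_ge k 3 with h | h
  · interval_cases k <;> decide
  · split_ifs <;> omega

theorem seven_mul_card_le_psi_add {G : Type*} [Group G] [Finite G] (hG : Odd (Nat.card G)) :
    7 * Nat.card G ≤
      psi G + 4 * Nat.card {a : G // a ^ 3 = 1} + 2 * Nat.card {a : G // a ^ 5 = 1} := by
  classical
  have := Fintype.ofFinite G
  have := Finset.sum_le_sum fun a (_ : a ∈ Finset.univ) =>
    seven_le_orderOf_add_ite (hG.of_dvd_nat (orderOf_dvd_natCard a))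
  simpa only [Finset.sum_add_distrib, Finset.sum_const, Finset.card_univ, smul_eq_mul,
    sum_ite_eq_mul_card, ← psi_eq_sum, ← Nat.card_eq_fintype_card, mul_comm _ 7] using this

theorem twenty_five_le_card_of_pow_five_eq_one {G : Type*} [Group G] [Finite G]
    (h : ∀ a : G, a ^ 5 = 1) (h1 : Nat.card G ≠ 1) (h5 : Nat.card G ≠ 5) : 25 ≤ Nat.card G := by
  have : Fact (Nat.Prime 5) := ⟨by norm_num⟩
  obtain ⟨k, hk⟩ := (IsPGroup.iff_card (p := 5)).mp fun a => ⟨1, (pow_one 5).symm ▸ h a⟩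
  rcases k with _ | _ | k
  · exact absurd hk h1
  · exact absurd hk h5
  · rw [hk, pow_succ, pow_succ]
    nlinarith [Nat.one_le_pow k 5 (by norm_num)]

section FiniteCommGroup

variable {A : Type*} [CommGroup A] [Finite A]

theorem three_mul_card_pow_eq_one_le (hA : Odd (Nat.card A)) {n : ℕ} (h : ∃ a : A, a ^ n ≠ 1) :
    3 * Nat.card {a : A // a ^ n = 1} ≤ Nat.card A := by
  have hker : Nat.card (powMonoidHom n : A →* A).ker = Nat.card {a : A // a ^ n = 1} :=
    Nat.card_congr (Equiv.subtypeEquivRight fun _ => MonoidHom.mem_ker)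
  refine hker ▸ Subgroup.three_mul_card_le_of_ne_top hA fun htop => ?_
  obtain ⟨a, ha⟩ := h
  exact ha (MonoidHom.mem_ker.mp (htop ▸ Subgroup.mem_top a))

theorem CommGroup.le_avgO_of_odd_card (hA : Odd (Nat.card A)) (h3 : ∃ a : A, a ^ 3 ≠ 1)
    (h5 : Nat.card A ≠ 5) : (121 / 25 : ℚ) ≤ avgO A := by
  have hsum := seven_mul_card_le_psi_add hA
  have hF3 := three_mul_card_pow_eq_one_le hA h3
  refine div_le_avgO (p := 121) (q := 25) (by norm_num) ?_
  by_cases h5a : ∀ a : A, a ^ 5 = 1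
  · have hF3one : Nat.card {a : A // a ^ 3 = 1} = 1 := by
      refine Nat.card_eq_one_iff_exists.mpr ⟨⟨1, one_pow 3⟩, fun ⟨a, ha⟩ => Subtype.ext ?_⟩
      rw [← orderOf_eq_one_iff, ← Nat.dvd_one]
      exact Nat.dvd_gcd (orderOf_dvd_of_pow_eq_one ha) (orderOf_dvd_of_pow_eq_one (h5a a))
    have hF5 : Nat.card {a : A // a ^ 5 = 1} = Nat.card A :=
      Nat.card_congr (Equiv.subtypeUnivEquiv h5a)
    have := twenty_five_le_card_of_pow_five_eq_one h5a (by omega) h5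
    omega
  · have := three_mul_card_pow_eq_one_le hA (not_forall.mp h5a)
    omega

theorem exists_mulEquiv_pi_zmod_of_pow_eq_one {p : ℕ} [Fact p.Prime] (h : ∀ a : A, a ^ p = 1) :
    ∃ k : ℕ, Nonempty (A ≃* Multiplicative (Fin k → ZMod p)) := by
  let _ : Module (ZMod p) (Additive A) := AddCommGroup.zmodModule (n := p) fun a => h a.toMul
  have : Module.Finite (ZMod p) (Additive A) := Module.Finite.of_finite
  exact ⟨_, ⟨AddEquiv.toMultiplicativeRight
    (Module.finBasis (ZMod p) (Additive A)).equivFun.toAddEquiv⟩⟩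

end FiniteCommGroup

theorem GDih.le_avgO_or {A : Type*} [CommGroup A] [Finite A] (hA : Odd (Nat.card A)) :
    (171 / 50 : ℚ) ≤ avgO (GDih A) ∨ (∀ a : A, a ^ 3 = 1) ∨ Nat.card A = 5 := by
  by_cases h3 : ∀ a : A, a ^ 3 = 1
  · exact .inr (.inl h3)
  by_cases h5 : Nat.card A = 5
  · exact .inr (.inr h5)
  have := CommGroup.le_avgO_of_odd_card hA (not_forall.mp h3) h5
  left
  rw [GDih.avgO_eq]
  linarith

section InvolutiveEndomorphism

variable {H : Type*} [Group H] [Finite H] (α : H →* H)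

theorem card_inv_mul_card_eqLocus_le (hH : Odd (Nat.card H)) :
    Nat.card {k : H // α k = k⁻¹} * Nat.card (α.eqLocus (MonoidHom.id H)) ≤ Nat.card H := by
  rw [← Nat.card_prod]
  refine Nat.card_le_card_of_injective (fun p => (p.1 : H) * p.2) ?_
  rintro ⟨⟨k, hk⟩, ⟨c, hc⟩⟩ ⟨⟨k', hk'⟩, ⟨c', hc'⟩⟩ h
  replace hc : α c = c := hc
  replace hc' : α c' = c' := hc'
  -- `g ↦ g (α g)⁻¹` sends `k c` to `k ^ 2`, and squaring is injective in a group of odd order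
  have hsq : ∀ k c, α k = k⁻¹ → α c = c → k * c * (α (k * c))⁻¹ = k ^ 2 := fun k c hk hc => by
    rw [map_mul, hk, hc, sq]
    group
  have hkk : k = k' := (Nat.Coprime.pow_left_bijective (Nat.coprime_two_right.mpr hH)).injective
    (by rw [← hsq k c hk hc, ← hsq k' c' hk' hc']; exact congrArg (fun g => g * (α g)⁻¹) h)
  subst hkk
  simp only [mul_right_inj] at h
  subst h
  rfl

theorem forall_map_eq_inv_of_eqLocus_eq_bot (hα : ∀ h, α (α h) = h)
    (hbot : α.eqLocus (MonoidHom.id H) = ⊥) (x : H) : α x = x⁻¹ := by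
  -- `n ↦ n⁻¹ α n` takes values in the inverted set, and is injective as `α` fixes only `1`
  have hinj : Injective fun n => n⁻¹ * α n := by
    intro x y hxy
    have hfix : y * x⁻¹ ∈ α.eqLocus (MonoidHom.id H) := by
      show α (y * x⁻¹) = y * x⁻¹
      rw [map_mul, map_inv, mul_inv_eq_iff_eq_mul, mul_assoc, ← inv_mul_eq_iff_eq_mul]
      simp only at hxy
      rw [hxy]
    rw [hbot, Subgroup.mem_bot, mul_inv_eq_one] at hfix
    exact hfix.symm
  obtain ⟨n, rfl⟩ := Finite.injective_iff_surjective.mp hinj x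
  simp [hα]

theorem forall_map_eq_inv_or_three_mul_card_le (hH : Odd (Nat.card H)) (hα : ∀ h, α (α h) = h) :
    (∀ h, α h = h⁻¹) ∨ 3 * Nat.card {k : H // α k = k⁻¹} ≤ Nat.card H := by
  by_cases hbot : α.eqLocus (MonoidHom.id H) = ⊥
  · exact .inl (forall_map_eq_inv_of_eqLocus_eq_bot α hα hbot)
  · have := Subgroup.three_le_card_of_ne_bot hH hbot
    have := card_inv_mul_card_eqLocus_le α hH
    exact .inr (by nlinarith)

end InvolutiveEndomorphism

section IndexTwo

variable {G : Type*} [Group G] {N : Subgroup G}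

theorem odd_orderOf_iff_mem_of_index_eq_two (hN : N.index = 2) (hodd : Odd (Nat.card N)) {x : G} :
    Odd (orderOf x) ↔ x ∈ N := by
  refine ⟨fun ⟨k, hk⟩ => ?_, fun hx => hodd.of_dvd_nat (N.orderOf_dvd_natCard hx)⟩
  have hx : x = (x ^ (k + 1)) ^ 2 := by
    rw [← pow_mul, show (k + 1) * 2 = orderOf x + 1 by omega, pow_succ, pow_orderOf_eq_one,
      one_mul]
  exact hx ▸ Subgroup.sq_mem_of_index_two hN _

theorem notMem_of_orderOf_eq_two_of_index_eq_two (hN : N.index = 2) (hodd : Odd (Nat.card N))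
    {x : G} (hx : orderOf x = 2) : x ∉ N := by
  rw [← odd_orderOf_iff_mem_of_index_eq_two hN hodd, hx]
  decide

theorem exists_index_eq_two_of_card_eq_two_mul_odd [Finite G] {m : ℕ}
    (hcard : Nat.card G = 2 * m) (hm : Odd m) : ∃ N : Subgroup G, N.index = 2 := by
  classical
  have := Fintype.ofFinite G
  obtain ⟨t, ht⟩ := exists_prime_orderOf_dvd_card' 2 (hcard ▸ dvd_mul_right 2 m)
  let f : G →* ℤˣ := Equiv.Perm.sign.comp (MulAction.toPermHom G G)
  have hft : f t = -1 := by
    have hsq : MulAction.toPermHom G G t ^ 2 = 1 := by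
      rw [← map_pow, ← ht, pow_orderOf_eq_one, map_one]
    have hfix : Fintype.card (Function.fixedPoints (MulAction.toPermHom G G t)) = 0 := by
      refine Fintype.card_eq_zero_iff.mpr ⟨fun ⟨x, hx⟩ => ?_⟩
      have : t = 1 := mul_eq_right.mp hx
      rw [this, orderOf_one] at ht
      exact absurd ht (by decide)
    show Equiv.Perm.sign _ = -1
    rw [Equiv.Perm.sign_of_pow_two_eq_one hsq, hfix, ← Nat.card_eq_fintype_card, hcard,
      Nat.sub_zero, Nat.mul_div_cancel_left m two_pos, hm.neg_one_pow]
  refine ⟨f.ker, ?_⟩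
  rw [Subgroup.index_ker, MonoidHom.range_eq_top.mpr ?_, Subgroup.card_top,
    Nat.card_eq_fintype_card, Fintype.card_units_int]
  intro u
  rcases Int.units_eq_one_or u with rfl | rfl
  · exact ⟨1, map_one f⟩
  · exact ⟨t, hft⟩

theorem forall_mul_mul_eq_inv_or_three_mul_card_le [Finite G] (hN : N.index = 2)
    (hodd : Odd (Nat.card N)) {t : G} (ht : orderOf t = 2) :
    (∀ n ∈ N, t * n * t = n⁻¹) ∨ 3 * Nat.card {x : G // orderOf x = 2} ≤ Nat.card N := by
  have := Subgroup.normal_of_index_eq_two hN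
  have hnotMem := fun {x : G} => notMem_of_orderOf_eq_two_of_index_eq_two hN hodd (x := x)
  have htt : t * t = 1 := by rw [← sq, ← ht, pow_orderOf_eq_one]
  let α : N →* N := (MulAut.conjNormal t).toMonoidHom
  have hα : ∀ n : N, (α n : G) = t * n * t := fun n => by
    simp [α, MulAut.conjNormal_apply, inv_eq_self_of_orderOf_eq_two ht]
  have hαα : ∀ n, α (α n) = n := fun n => Subtype.ext <| by
    rw [hα, hα, ← mul_assoc, ← mul_assoc, htt, one_mul, mul_assoc, htt, mul_one]
  refine (forall_map_eq_inv_or_three_mul_card_le α hodd hαα).imp (fun h n hn => ?_) fun h => ?_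
  · simpa [hα] using congrArg Subtype.val (h ⟨n, hn⟩)
  let ι : {x : G // orderOf x = 2} → {k : N // α k = k⁻¹} := fun x =>
    ⟨⟨t * x, (Subgroup.mul_mem_iff_of_index_two hN).mpr (iff_of_false (hnotMem ht) (hnotMem x.2))⟩,
      Subtype.ext <| by
        rw [hα, ← mul_assoc, htt, one_mul]
        simp [inv_eq_self_of_orderOf_eq_two ht, inv_eq_self_of_orderOf_eq_two x.2]⟩
  have hι : Injective ι := fun x y hxy =>
    Subtype.ext (mul_left_cancel (congrArg Subtype.val (congrArg Subtype.val hxy)))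
  exact le_trans (Nat.mul_le_mul_left 3 (Nat.card_le_card_of_injective ι hι)) h

theorem mul_comm_of_mul_mul_eq_inv {t : G} (ht : t * t = 1) (hinv : ∀ n ∈ N, t * n * t = n⁻¹)
    (a b : N) : a * b = b * a := by
  have h := hinv _ (N.mul_mem a.2 b.2)
  rw [show t * (a * b) * t = (t * a * t) * (t * b * t) by
    calc t * (a * b) * t = t * a * (t * t) * b * t := by rw [ht, mul_one]; simp only [mul_assoc]
      _ = (t * a * t) * (t * b * t) := by simp only [mul_assoc],
    hinv a a.2, hinv b b.2, mul_inv_rev] at h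
  exact Subtype.ext (by simpa using (congrArg (·⁻¹) h).symm)

theorem six_le_orderOf_add_ite [Finite G] [DecidableEq G] [DecidablePred (· ∈ N)] (hN : N.index = 2)
    (hodd : Odd (Nat.card N)) (x : G) :
    6 ≤ orderOf x + (if x ∈ N then 3 else 0) + (if orderOf x = 2 then 4 else 0) +
      (if x = 1 then 2 else 0) := by
  have hodd_iff := fun y : G => odd_orderOf_iff_mem_of_index_eq_two hN hodd (x := y)
  by_cases hx : x ∈ N
  · obtain ⟨k, hk⟩ := (hodd_iff x).mpr hx
    rcases eq_or_ne x 1 with rfl | hx1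
    · simp
    · have := mt orderOf_eq_one_iff.mp hx1
      split_ifs <;> omega
  · -- `x` has even order, and not 4, as `x ^ 2 ∈ N` has odd order
    have heven : ¬ Odd (orderOf x) := mt (hodd_iff x).mp hx
    have h4 : orderOf x ≠ 4 := fun h4 => by
      have h2 : orderOf (x ^ 2) = 2 := by
        rw [orderOf_pow_of_dvd two_ne_zero (by rw [h4]; norm_num), h4]
      exact notMem_of_orderOf_eq_two_of_index_eq_two hN hodd h2 (Subgroup.sq_mem_of_index_two hN x)
    have hx1 : x ≠ 1 := fun h => hx (h ▸ N.one_mem)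
    have hpos := orderOf_pos x
    rw [Nat.not_odd_iff] at heven
    simp only [hx, hx1, if_false]
    split_ifs <;> omega

theorem le_avgO_of_three_mul_card_le [Finite G] (hN : N.index = 2) (hodd : Odd (Nat.card N))
    (hfew : 3 * Nat.card {x : G // orderOf x = 2} ≤ Nat.card N) :
    (171 / 50 : ℚ) ≤ avgO G := by
  classical
  have := Fintype.ofFinite G
  have hsum := Finset.sum_le_sum fun x (_ : x ∈ Finset.univ) => six_le_orderOf_add_ite hN hodd x
  simp only [Finset.sum_add_distrib, Finset.sum_const, Finset.card_univ, smul_eq_mul,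
    sum_ite_eq_mul_card, ← psi_eq_sum, ← Nat.card_eq_fintype_card] at hsum
  have hG : Nat.card G = 2 * Nat.card N := by rw [← N.card_mul_index, hN, mul_comm]
  have hNsub : Nat.card {x // x ∈ N} = Nat.card N := rfl
  have hone : Nat.card {x : G // x = 1} = 1 := Nat.card_unique
  obtain ⟨t, ht⟩ := exists_prime_orderOf_dvd_card' 2 (hG ▸ dvd_mul_right 2 (Nat.card N))
  have : 0 < Nat.card {x : G // orderOf x = 2} := Nat.card_pos_iff.mpr ⟨⟨⟨t, ht⟩⟩, inferInstance⟩
  refine div_le_avgO (p := 171) (q := 50) (by norm_num) ?_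
  omega

end IndexTwo

theorem avgO_of_card_two_mul_odd_general {G : Type*} [Group G] [Finite G] (m : ℕ)
    (hodd : Odd m) (hcard : Nat.card G = 2 * m) :
    (171/50 : ℚ) ≤ avgO G ∨
      (∃ k : ℕ, Nonempty (G ≃* GDih (Multiplicative (Fin k → ZMod 3)))) ∨
      Nonempty (G ≃* DihedralGroup 5) := by
  obtain ⟨N, hN⟩ := exists_index_eq_two_of_card_eq_two_mul_odd hcard hodd
  have hNm : Nat.card N = m := by
    have := N.card_mul_index
    rw [hN, hcard] at this
    omega
  obtain ⟨t, ht⟩ := exists_prime_orderOf_dvd_card' (G := G) 2 (hcard ▸ dvd_mul_right 2 m)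
  rcases forall_mul_mul_eq_inv_or_three_mul_card_le hN (hNm ▸ hodd) ht with hinv | hfew
  · have htt : t * t = 1 := by rw [← sq, ← ht, pow_orderOf_eq_one]
    let _ : CommGroup N := { mul_comm := mul_comm_of_mul_mul_eq_inv htt hinv }
    have htN : t ∉ N.subtype.range := by
      rw [Subgroup.range_subtype]
      exact notMem_of_orderOf_eq_two_of_index_eq_two hN (hNm ▸ hodd) ht
    let e : G ≃* GDih N := (MulEquiv.ofBijective _ (GDih.lift_bijective N.subtype t htt
      (fun n => hinv n n.2) Subtype.val_injective (by rwa [Subgroup.range_subtype]) htN)).symm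
    rcases GDih.le_avgO_or (hNm ▸ hodd) with h | h | h
    · exact .inl (by rwa [avgO_congr e])
    · obtain ⟨k, ⟨f⟩⟩ := exists_mulEquiv_pi_zmod_of_pow_eq_one h
      exact .inr (.inl ⟨k, ⟨e.trans (GDih.congr f)⟩⟩)
    · have : Fact (Nat.Prime 5) := ⟨by norm_num⟩
      exact .inr (.inr ⟨e.trans (GDih.mulEquivDihedralGroup h)⟩)
  · exact .inl (le_avgO_of_three_mul_card_le hN (hNm ▸ hodd) hfew)

theorem avgO_of_card_two_mul_odd {G : Type*} [Group G] [Finite G] (m : ℕ)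
    (hodd : Odd m) (hm : 1 < m) (hcard : Nat.card G = 2 * m) :
    (171/50 : ℚ) ≤ avgO G ∨
      (∃ k : ℕ, Nonempty (G ≃* GDih (Multiplicative (Fin k → ZMod 3)))) ∨
      Nonempty (G ≃* DihedralGroup 5) :=
  avgO_of_card_two_mul_odd_general m hodd hcard
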